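/- Let m ≥ 1 and p₂(x+iy) = x^{2m}. With A_{jk}(z) = (1/(j!k!)) ∂^{j+k}p₂/∂z^j∂z̄^k(z) and μ₂(z) = inf_{j,k ≥ 1} |1/A_{jk}(z)|^{1/(j+k)}, one has μ₂(z) ∼ min{1, |Re z|^{-(m-1)}}: there are constants c, C > 0 depending only on m with c·min{1,|Re z|^{1-m}} ≤ μ₂(z) ≤ C·min{1,|Re z|^{1-m}} for all z = x+iy ∈ ℂ. -/

import Mathlib

lemma aux_le_rpow {a b : ℝ} (ha : 0 ≤ a) (s : ℕ) (hs : s ≠ 0) (h : a ^ s ≤ b) :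
    a ≤ b ^ (((s : ℕ) : ℝ))⁻¹ := by
  have h2 := Real.rpow_le_rpow (pow_nonneg ha s) h
    (by positivity : (0:ℝ) ≤ (((s : ℕ) : ℝ))⁻¹)
  rwa [← Real.rpow_natCast a s, ← Real.rpow_mul ha,
    mul_inv_cancel₀ (by exact_mod_cast hs), Real.rpow_one] at h2

lemma aux_rpow_le {a b : ℝ} (ha : 0 ≤ a) (hb : 0 ≤ b) (s : ℕ) (hs : s ≠ 0)
    (h : b ≤ a ^ s) : b ^ (((s : ℕ) : ℝ))⁻¹ ≤ a := by
  have h2 := Real.rpow_le_rpow hb h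
    (by positivity : (0:ℝ) ≤ (((s : ℕ) : ℝ))⁻¹)
  rwa [← Real.rpow_natCast a s, ← Real.rpow_mul ha,
    mul_inv_cancel₀ (by exact_mod_cast hs), Real.rpow_one] at h2



/-- The coefficients `A_{jk}(z) = (1/(j!k!)) (2m)!/(2m−j−k)! 2^{-(j+k)} x^{2m−j−k}`
(for `j+k ≤ 2m`) of `p₂(x+iy) = x^{2m}`. -/
noncomputable def A2 (m j k : ℕ) (z : ℂ) : ℝ :=
  (1 / ((j.factorial * k.factorial : ℕ) : ℝ)) *
    (((2 * m).factorial : ℝ) / (((2 * m - j - k).factorial : ℕ) : ℝ)) *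
    ((2 : ℝ) ^ (j + k))⁻¹ * z.re ^ (2 * m - j - k)

/-- `μ₂(z) = inf_{j,k ≥ 1, j+k ≤ 2m} |1/A_{jk}(z)|^{1/(j+k)}` over nonvanishing
coefficients. -/
noncomputable def mu2 (m : ℕ) (z : ℂ) : ℝ :=
  sInf {x : ℝ | ∃ j k : ℕ, 1 ≤ j ∧ 1 ≤ k ∧ j + k ≤ 2 * m ∧ A2 m j k z ≠ 0 ∧
    x = (1 / |A2 m j k z|) ^ ((1:ℝ) / ((j : ℝ) + (k : ℝ)))}

/-- For `p₂(x+iy) = x^{2m}`, `μ₂(z) ∼ min{1, |Re z|^{-(m-1)}} = (max{1,|Re z|^{m-1}})⁻¹`. -/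
theorem stmt15 (m : ℕ) (hm : 1 ≤ m) : ∃ c C : ℝ, 0 < c ∧ 0 < C ∧ ∀ z : ℂ,
    c * (max 1 (|z.re| ^ (m - 1)))⁻¹ ≤ mu2 m z ∧
    mu2 m z ≤ C * (max 1 (|z.re| ^ (m - 1)))⁻¹ := by
  set F : ℝ := (((2*m).factorial : ℕ) : ℝ) with hFdef
  have hF1 : (1:ℝ) ≤ F := by
    have h : 1 ≤ (2*m).factorial := (2*m).factorial_pos
    rw [hFdef]
    exact_mod_cast h
  have hF0 : (0:ℝ) < F := lt_of_lt_of_le one_pos hF1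
  refine ⟨F⁻¹, 2 * F, by positivity, by positivity, fun z => ?_⟩
  set y : ℝ := |z.re| with hydef
  have hy0 : (0:ℝ) ≤ y := abs_nonneg _
  set M : ℝ := max 1 (y ^ (m-1)) with hMdef
  have hM1 : (1:ℝ) ≤ M := le_max_left _ _
  have hM0 : (0:ℝ) < M := lt_of_lt_of_le one_pos hM1
  set S : Set ℝ := {x : ℝ | ∃ j k : ℕ, 1 ≤ j ∧ 1 ≤ k ∧ j + k ≤ 2 * m ∧ A2 m j k z ≠ 0 ∧
    x = (1 / |A2 m j k z|) ^ ((1:ℝ) / ((j : ℝ) + (k : ℝ)))} with hSdef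
  have hmu : mu2 m z = sInf S := rfl
  -- the (m,m) element
  have h0 : 2*m - m - m = 0 := by omega
  have hAmmval : A2 m m m z =
      (1 / ((m.factorial * m.factorial : ℕ) : ℝ)) * (F / 1) * ((2:ℝ) ^ (m+m))⁻¹ * 1 := by
    unfold A2
    rw [h0]
    norm_num
    exact Or.inl rfl
  have hAmm : 0 < A2 m m m z := by
    rw [hAmmval]
    have : (0:ℝ) < ((m.factorial * m.factorial : ℕ) : ℝ) := by
      exact_mod_cast Nat.mul_pos m.factorial_pos m.factorial_pos
    positivity
  have memmm : (1 / |A2 m m m z|) ^ ((1:ℝ) / ((m : ℝ) + (m : ℝ))) ∈ S :=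
    ⟨m, m, hm, hm, by omega, hAmm.ne', rfl⟩
  have hbdd : BddBelow S := by
    refine ⟨0, ?_⟩
    rintro x ⟨j, k, _, _, _, _, rfl⟩
    positivity
  constructor
  · -- lower bound
    rw [hmu]
    apply le_csInf ⟨_, memmm⟩
    rintro b ⟨j, k, hj, hk, hjk, hA, rfl⟩
    rw [show (1:ℝ)/((j:ℝ)+(k:ℝ)) = (((j+k : ℕ):ℝ))⁻¹ by push_cast; rw [one_div]]
    apply aux_le_rpow (by positivity) (j+k) (by omega)
    set P : ℝ := (1 / ((j.factorial * k.factorial : ℕ) : ℝ)) *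
      (F / (((2 * m - j - k).factorial : ℕ) : ℝ)) * ((2 : ℝ) ^ (j + k))⁻¹ with hPdef
    have hP : 0 < P := by
      have h1 : (0:ℝ) < ((j.factorial * k.factorial : ℕ) : ℝ) := by
        exact_mod_cast Nat.mul_pos j.factorial_pos k.factorial_pos
      have h2 : (0:ℝ) < (((2 * m - j - k).factorial : ℕ) : ℝ) := by
        exact_mod_cast (2*m - j - k).factorial_pos
      positivity
    have hA2 : A2 m j k z = P * z.re ^ (2*m - j - k) := rfl
    have habs : |A2 m j k z| = P * y ^ (2*m - j - k) := by
      rw [hA2, abs_mul, abs_of_pos hP, abs_pow]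
    have hpos : 0 < P * y ^ (2*m - j - k) := by
      rw [← habs]; exact abs_pos.mpr hA
    rw [habs, le_div_iff₀ hpos]
    have h1 : F⁻¹ ^ (j+k) * P ≤ 1 := by
      have hc1 : F⁻¹ ^ (j+k) ≤ F⁻¹ := pow_le_of_le_one (by positivity) (inv_le_one_of_one_le₀ hF1) (by omega)
      have hPF : P ≤ F := by
        have e1 : (1:ℝ) / ((j.factorial * k.factorial : ℕ) : ℝ) ≤ 1 := by
          rw [div_le_one (by exact_mod_cast Nat.mul_pos j.factorial_pos k.factorial_pos)]
          exact_mod_cast Nat.one_le_iff_ne_zero.mpr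
            (Nat.mul_ne_zero j.factorial_pos.ne' k.factorial_pos.ne')
        have e2 : F / (((2 * m - j - k).factorial : ℕ) : ℝ) ≤ F := by
          apply div_le_self hF0.le
          exact_mod_cast (2*m - j - k).factorial_pos
        have e3 : ((2:ℝ) ^ (j+k))⁻¹ ≤ 1 :=
          inv_le_one_of_one_le₀ (one_le_pow₀ one_le_two)
        calc P ≤ 1 * F * 1 := by
              apply mul_le_mul (mul_le_mul e1 e2 (by positivity) one_pos.le) e3 (by positivity)
              positivity
          _ = F := by ring
      calc F⁻¹ ^ (j+k) * P ≤ F⁻¹ * F := mul_le_mul hc1 hPF hP.le (by positivity)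
        _ = 1 := inv_mul_cancel₀ hF0.ne'
    have h2 : y ^ (2*m - j - k) ≤ M ^ (j+k) := by
      rcases le_or_gt y 1 with hy1 | hy1
      · calc y ^ (2*m - j - k) ≤ 1 := pow_le_one₀ hy0 hy1
          _ ≤ M ^ (j+k) := one_le_pow₀ hM1
      · have hexp : 2*m - j - k ≤ (m-1)*(j+k) := by
          have h2jk : 2 ≤ j + k := by omega
          calc 2*m - j - k ≤ 2*m - 2 := by omega
            _ = (m-1)*2 := by omega
            _ ≤ (m-1)*(j+k) := Nat.mul_le_mul_left _ h2jk
        calc y ^ (2*m - j - k) ≤ y ^ ((m-1)*(j+k)) := pow_le_pow_right₀ hy1.le hexp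
          _ = (y ^ (m-1)) ^ (j+k) := pow_mul y _ _
          _ ≤ M ^ (j+k) := pow_le_pow_left₀ (by positivity) (le_max_right _ _) _
    have hmm2 : F⁻¹ ^ (j+k) * P * y ^ (2*m - j - k) ≤ M ^ (j+k) := by
      have := mul_le_mul h1 h2 (by positivity) one_pos.le
      rwa [one_mul] at this
    calc (F⁻¹ * M⁻¹) ^ (j+k) * (P * y ^ (2*m - j - k))
        = (F⁻¹ ^ (j+k) * P * y ^ (2*m - j - k)) * (M ^ (j+k))⁻¹ := by
          rw [mul_pow, inv_pow]; ring
      _ ≤ M ^ (j+k) * (M ^ (j+k))⁻¹ := mul_le_mul_of_nonneg_right hmm2 (by positivity)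
      _ = 1 := mul_inv_cancel₀ (by positivity)
  · -- upper bound
    rw [hmu]
    rcases le_or_gt y 1 with hy1 | hy1
    · have hMeq : M = 1 := max_eq_left (pow_le_one₀ hy0 hy1)
      rw [hMeq, inv_one, mul_one]
      refine le_trans (csInf_le hbdd memmm) ?_
      rw [show (1:ℝ)/((m:ℝ)+(m:ℝ)) = (((m+m : ℕ):ℝ))⁻¹ by push_cast; rw [one_div]]
      apply aux_rpow_le (by positivity) (by positivity) (m+m) (by omega)
      rw [abs_of_pos hAmm, div_le_iff₀ hAmm, hAmmval]
      have hQ : (0:ℝ) < ((m.factorial * m.factorial : ℕ) : ℝ) := by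
        exact_mod_cast Nat.mul_pos m.factorial_pos m.factorial_pos
      have heq : (2*F) ^ (m+m) *
          ((1 / ((m.factorial * m.factorial : ℕ) : ℝ)) * (F / 1) * ((2:ℝ) ^ (m+m))⁻¹ * 1)
          = F ^ (m+m) * F / ((m.factorial * m.factorial : ℕ) : ℝ) := by
        rw [mul_pow]
        field_simp
      rw [heq, le_div_iff₀ hQ, one_mul]
      have hmf : ((m.factorial : ℕ) : ℝ) ≤ F := by
        rw [hFdef]
        exact_mod_cast Nat.factorial_le (by omega : m ≤ 2*m)
      have hmf0 : (0:ℝ) ≤ ((m.factorial : ℕ) : ℝ) := by positivity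
      calc ((m.factorial * m.factorial : ℕ) : ℝ)
          = ((m.factorial : ℕ) : ℝ) * ((m.factorial : ℕ) : ℝ) := by push_cast; ring
        _ ≤ F * F := mul_le_mul hmf hmf hmf0 hF0.le
        _ = F ^ 2 := (sq F).symm
        _ ≤ F ^ (m+m) := pow_le_pow_right₀ hF1 (by omega)
        _ ≤ F ^ (m+m) * F := le_mul_of_one_le_right (by positivity) hF1
    · have hMeq : M = y ^ (m-1) := max_eq_right (one_le_pow₀ hy1.le)
      have hu : (0:ℝ) < y ^ (m-1) := by positivity
      have hzre : z.re ≠ 0 := by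
        intro h
        rw [hydef, h, abs_zero] at hy1
        linarith
      have hQ1 : (0:ℝ) < (((1:ℕ).factorial * (1:ℕ).factorial : ℕ) : ℝ) := by norm_num
      have hQ2 : (0:ℝ) < (((2*m - 1 - 1).factorial : ℕ) : ℝ) := by
        exact_mod_cast (2*m - 1 - 1).factorial_pos
      set P11 : ℝ := (1 / (((1:ℕ).factorial * (1:ℕ).factorial : ℕ) : ℝ)) *
        (F / (((2*m - 1 - 1).factorial : ℕ) : ℝ)) * ((2:ℝ) ^ (1+1))⁻¹ with hP11def
      have hP11 : 0 < P11 := by positivity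
      have hA2 : A2 m 1 1 z = P11 * z.re ^ (2*m - 1 - 1) := rfl
      have hA11 : A2 m 1 1 z ≠ 0 := by
        rw [hA2]
        exact mul_ne_zero hP11.ne' (pow_ne_zero _ hzre)
      have mem11 : (1 / |A2 m 1 1 z|) ^ ((1:ℝ) / (((1:ℕ) : ℝ) + ((1:ℕ) : ℝ))) ∈ S :=
        ⟨1, 1, le_refl 1, le_refl 1, by omega, hA11, rfl⟩
      refine le_trans (csInf_le hbdd mem11) ?_
      rw [hMeq]
      rw [show (1:ℝ)/(((1:ℕ):ℝ)+((1:ℕ):ℝ)) = (((2:ℕ):ℝ))⁻¹ by norm_num]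
      apply aux_rpow_le (by positivity) (by positivity) 2 two_ne_zero
      have habs : |A2 m 1 1 z| = P11 * y ^ (2*m - 1 - 1) := by
        rw [hA2, abs_mul, abs_of_pos hP11, abs_pow]
      have hyp : (0:ℝ) < y ^ (2*m - 1 - 1) := by positivity
      rw [habs, div_le_iff₀ (by positivity)]
      have hy2 : (y ^ (m-1)) ^ 2 = y ^ (2*m - 1 - 1) := by
        rw [← pow_mul]
        congr 1
        omega
      have heq : (2*F * (y ^ (m-1))⁻¹) ^ 2 * (P11 * y ^ (2*m - 1 - 1))
          = 4 * F^2 * P11 := by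
        rw [mul_pow, mul_pow, ← hy2, ← inv_pow]
        have key : ((y ^ (m-1)) ^ 2)⁻¹ * (y ^ (m-1)) ^ 2 = 1 := inv_mul_cancel₀ (by positivity)
        linear_combination (2 ^ 2 * F ^ 2 * P11) * key
      rw [heq]
      have hP11eq : 4 * F^2 * P11 = F^2 * (F / (((2*m - 1 - 1).factorial : ℕ) : ℝ)) := by
        rw [hP11def]
        norm_num [Nat.factorial]
        ring
      rw [hP11eq]
      have h1 : (1:ℝ) ≤ F / (((2*m - 1 - 1).factorial : ℕ) : ℝ) := by
        rw [le_div_iff₀ hQ2, one_mul, hFdef]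
        exact_mod_cast Nat.factorial_le (by omega : 2*m - 1 - 1 ≤ 2*m)
      calc (1:ℝ) = 1 * 1 := (one_mul 1).symm
        _ ≤ F^2 * (F / (((2*m - 1 - 1).factorial : ℕ) : ℝ)) :=
            mul_le_mul (one_le_pow₀ hF1) h1 one_pos.le (by positivity)
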